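/- arXiv:2206.13421 — 2 statements merged into one kernel-verified Lean document; each statement's English description precedes it below -/
import Mathlib

section
/- Let G be a finite group and let G⁰ = G ∪ {0} be the semigroup obtained by adjoining a zero element to G. Then G⁰ is equidivisible, and G⁰ (viewed as a profinite semigroup with the discrete topology) is a KR-cover if and only if G is trivial. -/
set_option autoImplicit false

/-! ### General notions: topological semigroups, pseudovarieties, pro-V semigroups -/

/-- Continuity of a map into a type regarded with the discrete topology. -/
def ContinuousDisc {S : Type} [TopologicalSpace S] {T : Type} (f : S → T) : Prop :=
  @Continuous S T _ ⊥ f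

/-- A pseudovariety of semigroups: a class of finite semigroups closed under
homomorphic images, subsemigroups and finite direct products. -/
structure Pseudovariety : Type 1 where
  Mem : ∀ (S : Type) [Semigroup S], Prop
  finite : ∀ (S : Type) [Semigroup S], Mem S → Finite S
  closed_hom : ∀ (S T : Type) [Semigroup S] [Semigroup T] (f : S →ₙ* T),
    Mem S → Function.Surjective f → Mem T
  closed_sub : ∀ (S T : Type) [Semigroup S] [Semigroup T] (f : T →ₙ* S),
    Mem S → Function.Injective f → Mem T
  closed_prod : ∀ (ι : Type) [Finite ι] (S : ι → Type) [∀ i, Semigroup (S i)],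
    (∀ i, Mem (S i)) → Mem (∀ i, S i)

/-- A bundled member of a pseudovariety `V` (a finite semigroup belonging to `V`),
always regarded as carrying the discrete topology. -/
structure SgrIn (V : Pseudovariety) : Type 1 where
  carrier : Type
  [str : Semigroup carrier]
  mem : V.Mem carrier

attribute [instance] SgrIn.str

/-- A (bundled) topological semigroup. -/
structure TopSgr : Type 1 where
  carrier : Type
  [str : Semigroup carrier]
  [top : TopologicalSpace carrier]

attribute [instance] TopSgr.str TopSgr.top

/-- A finite semigroup regarded as a topological semigroup with the discrete topology. -/
def discTopSgr (S : Type) [Semigroup S] : TopSgr :=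
  @TopSgr.mk S _ ⊥

/-- A pro-V semigroup: a compact Hausdorff topological semigroup that is residually `V`. -/
def IsProV (V : Pseudovariety) (S : TopSgr) : Prop :=
  CompactSpace S.carrier ∧ T2Space S.carrier ∧ ContinuousMul S.carrier ∧
    ∀ x y : S.carrier, x ≠ y → ∃ (F : SgrIn V) (f : S.carrier →ₙ* F.carrier),
      ContinuousDisc ⇑f ∧ f x ≠ f y

/-- A profinite semigroup: a compact Hausdorff totally disconnected topological semigroup. -/
def IsProfiniteSgr (S : TopSgr) : Prop :=
  CompactSpace S.carrier ∧ T2Space S.carrier ∧ TotallyDisconnectedSpace S.carrier ∧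
    ContinuousMul S.carrier

/-- `C`, together with the continuous homomorphisms `φ i`, is a `V`-coproduct of the
family `S` of pro-`V` semigroups. -/
structure IsCoproduct (V : Pseudovariety) {I : Type} (S : I → TopSgr)
    (C : TopSgr) (φ : ∀ i, (S i).carrier →ₙ* C.carrier) : Prop where
  proV : IsProV V C
  cont : ∀ i, Continuous ⇑(φ i)
  universal : ∀ (T : TopSgr), IsProV V T →
    ∀ ψ : ∀ i, (S i).carrier →ₙ* T.carrier, (∀ i, Continuous ⇑(ψ i)) →
      ∃! Ψ : C.carrier →ₙ* T.carrier, Continuous ⇑Ψ ∧ ∀ i, Ψ.comp (φ i) = ψ i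

/-- `P`, together with the homomorphisms `e i`, is a free product (coproduct in the
category of semigroups) of the family `S`. -/
structure IsFreeProduct {I : Type} (S : I → Type) [∀ i, Semigroup (S i)]
    (P : Type) [Semigroup P] (e : ∀ i, S i →ₙ* P) : Prop where
  universal : ∀ (T : Type) [Semigroup T] (f : ∀ i, S i →ₙ* T),
    ∃! F : P →ₙ* T, ∀ i, F.comp (e i) = f i

/-! ### Particular pseudovarieties and related notions -/

/-- `V` contains the pseudovariety `Sl` of finite semilattices. -/
def ContainsSl (V : Pseudovariety) : Prop :=
  ∀ (S : Type) [Semigroup S] [Finite S],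
    (∀ x y : S, x * y = y * x) → (∀ x : S, x * x = x) → V.Mem S

/-- Green's `J`-preorder: `s ≤_J t`, i.e. `s ∈ S^I t S^I`. -/
def JBelow {S : Type} [Semigroup S] (s t : S) : Prop :=
  ∃ x y : WithOne S, x * (t : WithOne S) * y = (s : WithOne S)

/-- `V` contains the pseudovariety `J` of finite `J`-trivial semigroups. -/
def ContainsJ (V : Pseudovariety) : Prop :=
  ∀ (S : Type) [Semigroup S] [Finite S],
    (∀ s t : S, JBelow s t → JBelow t s → s = t) → V.Mem S

/-- The preimage of an idempotent under a semigroup homomorphism, as a subsemigroup. -/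
def fiberSub {S T : Type} [Semigroup S] [Semigroup T] (ψ : S →ₙ* T) (e : T)
    (he : e * e = e) : Subsemigroup S where
  carrier := ⇑ψ ⁻¹' {e}
  mul_mem' := by
    intro a b ha hb
    simp only [Set.mem_preimage, Set.mem_singleton_iff] at *
    rw [map_mul, ha, hb, he]

/-- The set of products of `n+1` elements of a semigroup (so `nthProds S 0 = S`). -/
def nthProds (S : Type) [Semigroup S] : ℕ → Set S
  | 0 => Set.univ
  | n + 1 => {x | ∃ a y, y ∈ nthProds S n ∧ x = a * y}

/-- A nilpotent semigroup: it has a zero `z` and some power of the semigroup is `{z}`. -/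
def IsNilpotentSgr (S : Type) [Semigroup S] : Prop :=
  ∃ z : S, (∀ x : S, z * x = z ∧ x * z = z) ∧ ∃ n : ℕ, nthProds S n ⊆ {z}

/-- A generator of the Mal'cev product `N ⓜ V`: a finite semigroup admitting a surjective
homomorphism onto a member of `V` all of whose idempotent fibers are nilpotent. -/
def NMalcevGen (V : Pseudovariety) (S : Type) [Semigroup S] : Prop :=
  Finite S ∧ ∃ (T : SgrIn V) (ψ : S →ₙ* T.carrier), Function.Surjective ψ ∧
    ∀ (e : T.carrier) (he : e * e = e), IsNilpotentSgr (fiberSub ψ e he)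

/-- The equality `N ⓜ V = V`: `V` coincides with the smallest pseudovariety containing
all finite semigroups admitting an `N`-morphism onto some member of `V`. -/
def NMalcevFixed (V : Pseudovariety) : Prop :=
  ∀ (S : Type) [Semigroup S] [Finite S],
    V.Mem S ↔ ∀ U : Pseudovariety,
      (∀ (S' : Type) [Semigroup S'], NMalcevGen V S' → U.Mem S') → U.Mem S

/-- A completely simple semigroup: simple with a primitive idempotent. -/
def IsCompletelySimple (S : Type) [Semigroup S] : Prop :=
  (∀ J : Set S, J.Nonempty → (∀ s x : S, x ∈ J → s * x ∈ J ∧ x * s ∈ J) → J = Set.univ) ∧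
  ∃ e : S, e * e = e ∧ ∀ f : S, f * f = f → e * f = f → f * e = f → f = e

/-- An equidivisible semigroup. -/
def Equidivisible (S : Type) [Semigroup S] : Prop :=
  ∀ u v x y : S, u * v = x * y →
    ∃ t : WithOne S,
      ((x : WithOne S) = (u : WithOne S) * t ∧ t * (y : WithOne S) = (v : WithOne S)) ∨
      ((x : WithOne S) * t = (u : WithOne S) ∧ (y : WithOne S) = t * (v : WithOne S))

/-! ### The two-sided Karnofsky–Rhodes expansion -/

/-- Vertices of the two-sided Cayley graph of `T`: pairs of elements of `T^I`. -/
abbrev KRVtx (T : Type) : Type := WithOne T × WithOne T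

/-- Edges of the two-sided Cayley graph: (source, label, target). -/
abbrev KREdge (A T : Type) : Type := KRVtx T × A × KRVtx T

/-- The image in `T^I` of a letter. -/
def letterImg {A T : Type} [Semigroup T] (ψ : FreeSemigroup A →ₙ* T) (a : A) : WithOne T :=
  (ψ (FreeSemigroup.of a) : WithOne T)

/-- The image in `T^I` of a (possibly empty) word. -/
def wordImg {A T : Type} [Semigroup T] (ψ : FreeSemigroup A →ₙ* T) (w : List A) : WithOne T :=
  (w.map (letterImg ψ)).prod

/-- `e` is an edge of the two-sided Cayley graph `Γ_ψ`. -/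
def IsKREdge {A T : Type} [Semigroup T] (ψ : FreeSemigroup A →ₙ* T) (e : KREdge A T) : Prop :=
  e.1.1 * letterImg ψ e.2.1 = e.2.2.1 ∧ e.1.2 = letterImg ψ e.2.1 * e.2.2.2

/-- One step along an edge of `Γ_ψ` (used to define directed paths). -/
def KRStep {A T : Type} [Semigroup T] (ψ : FreeSemigroup A →ₙ* T) (v w : KRVtx T) : Prop :=
  ∃ a : A, v.1 * letterImg ψ a = w.1 ∧ v.2 = letterImg ψ a * w.2

/-- A transition edge of `Γ_ψ`: an edge from whose target there is no directed path
back to its source. -/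
def IsTransEdge {A T : Type} [Semigroup T] (ψ : FreeSemigroup A →ₙ* T) (e : KREdge A T) : Prop :=
  IsKREdge ψ e ∧ ¬ Relation.ReflTransGen (KRStep ψ) e.2.2 e.1

/-- The list of letters of an element of the free semigroup. -/
def letters {A : Type} (u : FreeSemigroup A) : List A := u.head :: u.tail

/-- The set of edges of the path `p_u` of `Γ_ψ` from `(I, ψ u)` to `(ψ u, I)` labeled by `u`. -/
def pathEdges {A T : Type} [Semigroup T] (ψ : FreeSemigroup A →ₙ* T) (u : FreeSemigroup A) :
    Set (KREdge A T) :=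
  {e | ∃ (w₁ w₂ : List A) (a : A), letters u = w₁ ++ a :: w₂ ∧
    e = ((wordImg ψ w₁, wordImg ψ (a :: w₂)), a, (wordImg ψ (w₁ ++ [a]), wordImg ψ w₂))}

/-- The set `T(p_u)` of transition edges of `Γ_ψ` occurring in the path `p_u`. -/
def transEdges {A T : Type} [Semigroup T] (ψ : FreeSemigroup A →ₙ* T) (u : FreeSemigroup A) :
    Set (KREdge A T) :=
  {e ∈ pathEdges ψ u | IsTransEdge ψ e}

/-- A realization of the two-sided Karnofsky–Rhodes expansion of `ψ : A⁺ → T`: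
a semigroup `K = T_ψ^KR` together with the projection `ψ^KR : A⁺ → K`, which is onto and
identifies `u` and `v` exactly when `ψ u = ψ v` and `T(p_u) = T(p_v)`, and the canonical
homomorphism `π : T_ψ^KR → T` with `π ∘ ψ^KR = ψ`. -/
structure KRExp {A T : Type} [Semigroup T] (ψ : FreeSemigroup A →ₙ* T) : Type 1 where
  K : Type
  [strK : Semigroup K]
  [finK : Finite K]
  ψKR : FreeSemigroup A →ₙ* K
  π : K →ₙ* T
  surj : Function.Surjective ⇑ψKR
  ker : ∀ u v : FreeSemigroup A, ψKR u = ψKR v ↔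
    (ψ u = ψ v ∧ transEdges ψ u = transEdges ψ v)
  proj : π.comp ψKR = ψ

attribute [instance] KRExp.strK KRExp.finK

/-- The data of a two-sided Karnofsky–Rhodes expansion of a finite semigroup `T`:
a finite alphabet `A`, an onto homomorphism `ψ : A⁺ → T`, and a realization `T_ψ^KR`. -/
structure KRData (T : Type) [Semigroup T] : Type 1 where
  A : Type
  [finA : Finite A]
  ψ : FreeSemigroup A →ₙ* T
  surjψ : Function.Surjective ⇑ψ
  E : KRExp ψ

attribute [instance] KRData.finA

/-- `V` is closed under two-sided Karnofsky–Rhodes expansion. -/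
def ClosedUnderKR (V : Pseudovariety) : Prop :=
  ∀ (A T : Type) [Finite A] [Semigroup T], V.Mem T →
    ∀ (ψ : FreeSemigroup A →ₙ* T), Function.Surjective ⇑ψ →
      ∀ E : KRExp ψ, V.Mem E.K

/-! ### KR-covers -/

/-- `S` is a KR-cover of the finite semigroup `T`. -/
def IsKRCoverOf (S : TopSgr) (T : Type) [Semigroup T] [Finite T] : Prop :=
  (∃ φ : S.carrier →ₙ* T, ContinuousDisc ⇑φ ∧ Function.Surjective ⇑φ) ∧
  ∀ φ : S.carrier →ₙ* T, ContinuousDisc ⇑φ → Function.Surjective ⇑φ →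
    ∃ (D : KRData T) (φψ : S.carrier →ₙ* D.E.K),
      ContinuousDisc ⇑φψ ∧ D.E.π.comp φψ = φ

/-- `S` is a KR-cover: a KR-cover of each of its finite continuous homomorphic images. -/
def IsKRCover (S : TopSgr) : Prop :=
  ∀ (T : Type) [Semigroup T] [Finite T],
    (∃ φ : S.carrier →ₙ* T, ContinuousDisc ⇑φ ∧ Function.Surjective ⇑φ) →
    IsKRCoverOf S T

/-- `S` is `V`-projective. -/
def IsVProjective (V : Pseudovariety) (S : TopSgr) : Prop :=
  IsProV V S ∧ ∀ (T R : TopSgr), IsProV V T → IsProV V R →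
    ∀ (f : S.carrier →ₙ* T.carrier) (g : R.carrier →ₙ* T.carrier),
      Continuous ⇑f → Continuous ⇑g → Function.Surjective ⇑g →
        ∃ f' : S.carrier →ₙ* R.carrier, Continuous ⇑f' ∧ g.comp f' = f

/-! ### Strong KR-covers and letter super-cancellativity -/

/-- `κ : A → S` is a generating mapping: its image generates a dense subsemigroup. -/
def GeneratingMap {A : Type} (S : TopSgr) (κ : A → S.carrier) : Prop :=
  Dense (Subsemigroup.closure (Set.range κ) : Set S.carrier)

/-- The homomorphism `A⁺ → T` extending `a ↦ φ (κ a)`. -/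
def liftGen {A : Type} (S : TopSgr) (κ : A → S.carrier) {T : Type} [Semigroup T]
    (φ : S.carrier →ₙ* T) : FreeSemigroup A →ₙ* T :=
  FreeSemigroup.lift (fun a => φ (κ a))

/-- `S` is a strong KR-cover of the finite semigroup `T` with respect to the
generating mapping `κ`. -/
def IsStrongKRCoverOfWrt {A : Type} (S : TopSgr) (κ : A → S.carrier)
    (T : Type) [Semigroup T] [Finite T] : Prop :=
  ∀ φ : S.carrier →ₙ* T, ContinuousDisc ⇑φ → Function.Surjective ⇑φ →
    ∃ (E : KRExp (liftGen S κ φ)) (φκ : S.carrier →ₙ* E.K),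
      ContinuousDisc ⇑φκ ∧ E.π.comp φκ = φ ∧
      ∀ a : A, φκ (κ a) = E.ψKR (FreeSemigroup.of a)

/-- `S` is a strong KR-cover of the finite semigroup `T` (with respect to some
generating mapping with finite domain). -/
def IsStrongKRCoverOf (S : TopSgr) (T : Type) [Semigroup T] [Finite T] : Prop :=
  ∃ A : Type, Finite A ∧ ∃ κ : A → S.carrier, GeneratingMap S κ ∧
    IsStrongKRCoverOfWrt S κ T

/-- `S` is a strong KR-cover: a strong KR-cover of each of its finite continuous
homomorphic images. -/
def IsStrongKRCover (S : TopSgr) : Prop :=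
  ∀ (T : Type) [Semigroup T] [Finite T],
    (∃ φ : S.carrier →ₙ* T, ContinuousDisc ⇑φ ∧ Function.Surjective ⇑φ) →
    IsStrongKRCoverOf S T

/-- `S` is letter super-cancellative with respect to the subset `A` of `S`. -/
def IsLSC (S : TopSgr) (A : Set S.carrier) : Prop :=
  ∀ a ∈ A, ∀ b ∈ A, ∀ u v : WithOne S.carrier,
    (u * (a : WithOne S.carrier) = v * (b : WithOne S.carrier) → a = b ∧ u = v) ∧
    ((a : WithOne S.carrier) * u = (b : WithOne S.carrier) * v → a = b ∧ u = v)

/-! ### `S^I` and inverse limits -/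

/-- The sum topology on `S^I = S ∪ {I}`: the point `I` is isolated and `S` keeps
its topology. -/
def withOneTopology (S : Type) [TopologicalSpace S] : TopologicalSpace (WithOne S) where
  IsOpen V := IsOpen ((fun s : S => (s : WithOne S)) ⁻¹' V)
  isOpen_univ := by simp
  isOpen_inter := by
    intro U V hU hV
    rw [Set.preimage_inter]
    exact hU.inter hV
  isOpen_sUnion := by
    intro s hs
    rw [Set.preimage_sUnion]
    exact isOpen_biUnion hs

/-- `S^I` as a topological semigroup (in fact a monoid): `S` with an isolated identity
adjoined. -/
def withOneTopSgr (S : TopSgr) : TopSgr :=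
  @TopSgr.mk (WithOne S.carrier) _ (withOneTopology S.carrier)

/-- The inverse limit of a family of topological semigroups, as a subsemigroup of
the product. -/
def invLimSub {I : Type} [Preorder I] (S : I → TopSgr)
    (f : ∀ i j, j ≤ i → ((S i).carrier →ₙ* (S j).carrier)) :
    Subsemigroup (∀ i, (S i).carrier) where
  carrier := {x | ∀ i j (h : j ≤ i), f i j h (x i) = x j}
  mul_mem' := by
    intro a b ha hb i j h
    simp only [Pi.mul_apply, map_mul, ha i j h, hb i j h]

/-- The inverse limit as a topological semigroup (with the topology induced from the
product topology). -/
def invLimTopSgr {I : Type} [Preorder I] (S : I → TopSgr)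
    (f : ∀ i j, j ≤ i → ((S i).carrier →ₙ* (S j).carrier)) : TopSgr :=
  TopSgr.mk (invLimSub S f)

/-
Every nonzero element of `G⁰` is invertible, which makes `G⁰` equidivisible.

For the KR-cover part, `G⁰` is a finite cancellative monoid with zero. If it is `{0, 1}`, a
continuous image of it is a pair of idempotents `e ≥ z`; such a pair lifts along any onto
morphism of finite semigroups to a pair of idempotents `f ≥ o` (Ellis' idempotent lemma), and
sending `0 ↦ o` and `1 ↦ f` lifts the image into any KR expansion. Conversely, let `σ` split
`π : T_ψ^KR → G⁰`, and let the words `u` and `z` represent `σ g` and `σ 0`. Then `u z` and `z`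
have the same image in `T_ψ^KR`, hence the same transition edges. In the path of a word of
image `0`, the edge entering the ideal `{0}` is a transition edge, and its source is the image of
the longest zero-free prefix of the word. For `u z` that source is `g` times the one for `z`, so
`g = 1` by cancellation.
-/

instance {T : Type*} [Finite T] : Finite (WithOne T) := inferInstanceAs (Finite (Option T))

instance {T : Type*} [Finite T] : Finite (WithZero T) := inferInstanceAs (Finite (Option T))

theorem Equidivisible.of_exists {S : Type} [Semigroup S]
    (h : ∀ u v x y : S, u * v = x * y →
      ∃ t : S, (x = u * t ∧ t * y = v) ∨ (x * t = u ∧ y = t * v)) :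
    Equidivisible S := by
  intro u v x y huv
  obtain ⟨t, ht⟩ := h u v x y huv
  exact ⟨t, by simpa only [← WithOne.coe_mul, WithOne.coe_inj] using ht⟩

theorem equidivisible_of_groupWithZero (G₀ : Type) [GroupWithZero G₀] : Equidivisible G₀ := by
  refine Equidivisible.of_exists fun u v x y huv => ?_
  by_cases hx : x = 0
  · subst hx
    rcases eq_or_ne v 0 with rfl | hv
    · exact ⟨0, Or.inl ⟨(mul_zero u).symm, zero_mul y⟩⟩
    · have hu : u = 0 := by simpa [hv] using huv
      exact ⟨y * v⁻¹, Or.inr ⟨by rw [zero_mul, hu], (inv_mul_cancel_right₀ hv y).symm⟩⟩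
  · exact ⟨x⁻¹ * u, Or.inr ⟨mul_inv_cancel_left₀ hx u,
      by rw [mul_assoc, huv, inv_mul_cancel_left₀ hx]⟩⟩

theorem exists_isIdempotentElem_mem {K : Type*} [Semigroup K] [Finite K] {s : Set K}
    (hs : s.Nonempty) (hmul : ∀ x ∈ s, ∀ y ∈ s, x * y ∈ s) : ∃ m ∈ s, IsIdempotentElem m := by
  let : TopologicalSpace K := ⊥
  have : DiscreteTopology K := ⟨rfl⟩
  exact exists_idempotent_in_compact_subsemigroup (fun _ => continuous_of_discreteTopology) s hs
    s.toFinite.isCompact hmul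

theorem exists_isIdempotentElem_lift {K T : Type*} [Semigroup K] [Finite K] [Semigroup T]
    {π : K →ₙ* T} (hπ : Function.Surjective π) {e z : T} (he : IsIdempotentElem e)
    (hz : IsIdempotentElem z) (hez : e * z = z) (hze : z * e = z) :
    ∃ f o : K, IsIdempotentElem f ∧ IsIdempotentElem o ∧ f * o = o ∧ o * f = o ∧
      π f = e ∧ π o = z := by
  obtain ⟨f, hπf : π f = e, hf⟩ := exists_isIdempotentElem_mem (s := π ⁻¹' {e}) (hπ e)
    fun x hx y hy => by simp_all [he.eq]
  obtain ⟨y, hy⟩ := hπ z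
  obtain ⟨o, ⟨hπo, hfo, hof⟩, ho⟩ :=
    exists_isIdempotentElem_mem (s := {k | π k = z ∧ f * k = k ∧ k * f = k})
      ⟨f * y * f, by simp [hπf, hy, hez, hze], by simp [← mul_assoc, hf.eq],
        by simp [mul_assoc, hf.eq]⟩
      fun a ⟨ha, hfa, _⟩ b ⟨hb, _, hbf⟩ =>
        ⟨by simp [ha, hb, hz.eq], by rw [← mul_assoc, hfa], by rw [mul_assoc, hbf]⟩
  exact ⟨f, o, hf, ho, hfo, hof, hπf, hπo⟩

section PiecewiseZero

variable {M K : Type*} [MulZeroClass M] [NoZeroDivisors M] [Semigroup K] {f o : K}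
  (hf : IsIdempotentElem f) (ho : IsIdempotentElem o) (hfo : f * o = o) (hof : o * f = o)

open Classical in
noncomputable def MulHom.piecewiseZero : M →ₙ* K where
  toFun s := if s = 0 then o else f
  map_mul' s t := by
    by_cases hs : s = 0 <;> by_cases ht : t = 0 <;> simp [hs, ht, hf.eq, ho.eq, hfo, hof]

theorem MulHom.piecewiseZero_zero : MulHom.piecewiseZero hf ho hfo hof (0 : M) = o := by
  simp [MulHom.piecewiseZero]

theorem MulHom.piecewiseZero_of_ne_zero {s : M} (hs : s ≠ 0) :
    MulHom.piecewiseZero hf ho hfo hof s = f := by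
  simp [MulHom.piecewiseZero, hs]

end PiecewiseZero

section KarnofskyRhodes

variable {A T : Type} [Semigroup T] (ψ : FreeSemigroup A →ₙ* T)

theorem letters_mul (u v : FreeSemigroup A) : letters (u * v) = letters u ++ letters v := rfl

theorem wordImg_append (l₁ l₂ : List A) :
    wordImg ψ (l₁ ++ l₂) = wordImg ψ l₁ * wordImg ψ l₂ := by
  simp [wordImg]

theorem wordImg_cons (a : A) (l : List A) :
    wordImg ψ (a :: l) = letterImg ψ a * wordImg ψ l := by
  simp [wordImg]

theorem wordImg_letters (u : FreeSemigroup A) : wordImg ψ (letters u) = (ψ u : WithOne T) := by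
  induction u using FreeSemigroup.recOnMul with
  | ih1 a => simp [letters, wordImg, letterImg, FreeSemigroup.of]
  | ih2 x y hx hy => rw [letters_mul, wordImg_append, hx, hy, map_mul, WithOne.coe_mul]

/-- The edge of the path `p_u` read at the letter `a` of the factorization `u = w₁ a w₂`. -/
def pathEdgeAt (w₁ : List A) (a : A) (w₂ : List A) : KREdge A T :=
  ((wordImg ψ w₁, wordImg ψ (a :: w₂)), a, (wordImg ψ (w₁ ++ [a]), wordImg ψ w₂))

theorem isKREdge_of_mem_pathEdges {u : FreeSemigroup A} {e : KREdge A T}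
    (he : e ∈ pathEdges ψ u) : IsKREdge ψ e := by
  obtain ⟨w₁, w₂, a, -, rfl⟩ := he
  exact ⟨by simp [wordImg], by simp [wordImg_cons]⟩

def edgeMulRight (x : WithOne T) (e : KREdge A T) : KREdge A T :=
  ((e.1.1, e.1.2 * x), e.2.1, (e.2.2.1, e.2.2.2 * x))

def edgeMulLeft (y : WithOne T) (e : KREdge A T) : KREdge A T :=
  ((y * e.1.1, e.1.2), e.2.1, (y * e.2.2.1, e.2.2.2))

theorem edgeMulRight_pathEdgeAt (w₁ : List A) (a : A) (w₂ l : List A) :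
    edgeMulRight (wordImg ψ l) (pathEdgeAt ψ w₁ a w₂) = pathEdgeAt ψ w₁ a (w₂ ++ l) := by
  simp [edgeMulRight, pathEdgeAt, wordImg_cons, wordImg_append, mul_assoc]

theorem edgeMulLeft_pathEdgeAt (w₁ : List A) (a : A) (w₂ l : List A) :
    edgeMulLeft (wordImg ψ l) (pathEdgeAt ψ w₁ a w₂) = pathEdgeAt ψ (l ++ w₁) a w₂ := by
  simp [edgeMulLeft, pathEdgeAt, wordImg_append]

theorem pathEdges_mul (u v : FreeSemigroup A) :
    pathEdges ψ (u * v) =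
      edgeMulRight (ψ v : WithOne T) '' pathEdges ψ u ∪
        edgeMulLeft (ψ u : WithOne T) '' pathEdges ψ v := by
  rw [← wordImg_letters ψ u, ← wordImg_letters ψ v]
  ext e
  constructor
  · rintro ⟨w₁, w₂, a, hsplit, rfl⟩
    rw [letters_mul, List.append_eq_append_iff] at hsplit
    rcases hsplit with ⟨w, rfl, hv⟩ | ⟨_ | ⟨b, w⟩, hu, hw⟩
    · exact Or.inr ⟨pathEdgeAt ψ w a w₂, ⟨w, w₂, a, hv, rfl⟩, edgeMulLeft_pathEdgeAt ψ _ _ _ _⟩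
    · rw [List.append_nil] at hu
      refine Or.inr ⟨pathEdgeAt ψ [] a w₂, ⟨[], w₂, a, hw.symm, rfl⟩, ?_⟩
      rw [edgeMulLeft_pathEdgeAt, hu, List.append_nil]
      rfl
    · obtain ⟨rfl, rfl⟩ := List.cons_eq_cons.1 hw
      exact Or.inl ⟨pathEdgeAt ψ w₁ a w, ⟨w₁, w, a, hu, rfl⟩, edgeMulRight_pathEdgeAt ψ _ _ _ _⟩
  · rintro (⟨_, ⟨w₁, w₂, a, h, rfl⟩, rfl⟩ | ⟨_, ⟨w₁, w₂, a, h, rfl⟩, rfl⟩)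
    · exact ⟨w₁, w₂ ++ letters v, a, by simp [letters_mul, h], edgeMulRight_pathEdgeAt ψ _ _ _ _⟩
    · exact ⟨letters u ++ w₁, w₂, a, by simp [letters_mul, h], edgeMulLeft_pathEdgeAt ψ _ _ _ _⟩

theorem reflTransGen_krStep_mulRight (x : WithOne T) {v w : KRVtx T}
    (h : Relation.ReflTransGen (KRStep ψ) v w) :
    Relation.ReflTransGen (KRStep ψ) (v.1, v.2 * x) (w.1, w.2 * x) := by
  refine Relation.ReflTransGen.lift (fun p : KRVtx T => (p.1, p.2 * x)) ?_ _ _ h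
  rintro p q ⟨a, h₁, h₂⟩
  exact ⟨a, h₁, show p.2 * x = letterImg ψ a * (q.2 * x) by rw [h₂, mul_assoc]⟩

theorem reflTransGen_krStep_mulLeft (y : WithOne T) {v w : KRVtx T}
    (h : Relation.ReflTransGen (KRStep ψ) v w) :
    Relation.ReflTransGen (KRStep ψ) (y * v.1, v.2) (y * w.1, w.2) := by
  refine Relation.ReflTransGen.lift (fun p : KRVtx T => (y * p.1, p.2)) ?_ _ _ h
  rintro p q ⟨a, h₁, h₂⟩
  exact ⟨a, show y * p.1 * letterImg ψ a = y * q.1 by rw [← h₁, mul_assoc], h₂⟩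

theorem transEdges_mul (u v : FreeSemigroup A) :
    transEdges ψ (u * v) =
      (edgeMulRight (ψ v : WithOne T) '' transEdges ψ u ∪
        edgeMulLeft (ψ u : WithOne T) '' transEdges ψ v) ∩ {e | IsTransEdge ψ e} := by
  ext f
  constructor
  · rintro ⟨hf, htf⟩
    rw [pathEdges_mul] at hf
    rcases hf with ⟨e, he, rfl⟩ | ⟨e, he, rfl⟩
    · exact ⟨Or.inl ⟨e, ⟨he, isKREdge_of_mem_pathEdges ψ he,
        fun hr => htf.2 (reflTransGen_krStep_mulRight ψ _ hr)⟩, rfl⟩, htf⟩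
    · exact ⟨Or.inr ⟨e, ⟨he, isKREdge_of_mem_pathEdges ψ he,
        fun hr => htf.2 (reflTransGen_krStep_mulLeft ψ _ hr)⟩, rfl⟩, htf⟩
  · rintro ⟨⟨e, ⟨he, -⟩, rfl⟩ | ⟨e, ⟨he, -⟩, rfl⟩, htf⟩
    · exact ⟨by rw [pathEdges_mul]; exact Or.inl ⟨e, he, rfl⟩, htf⟩
    · exact ⟨by rw [pathEdges_mul]; exact Or.inr ⟨e, he, rfl⟩, htf⟩

def krCon : Con (FreeSemigroup A) where
  r u v := ψ u = ψ v ∧ transEdges ψ u = transEdges ψ v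
  iseqv := ⟨fun _ => ⟨rfl, rfl⟩, fun h => ⟨h.1.symm, h.2.symm⟩,
    fun h h' => ⟨h.1.trans h'.1, h.2.trans h'.2⟩⟩
  mul' := by
    rintro w x y z ⟨h₁, h₂⟩ ⟨h₃, h₄⟩
    exact ⟨by rw [map_mul, map_mul, h₁, h₃], by rw [transEdges_mul, transEdges_mul, h₁, h₂, h₃, h₄]⟩

noncomputable def krExp [Finite A] [Finite T] : KRExp ψ where
  K := (krCon ψ).Quotient
  ψKR := ⟨(↑), fun _ _ => rfl⟩
  π := ⟨Quotient.lift ψ fun _ _ h => h.1, by rintro ⟨u⟩ ⟨v⟩; exact map_mul ψ u v⟩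
  surj := Quotient.mk''_surjective
  ker _ _ := (krCon ψ).eq
  proj := rfl
  finK := Finite.of_injective
    (Quotient.lift (fun u => (ψ u, transEdges ψ u)) fun _ _ h => Prod.ext h.1 h.2 :
      (krCon ψ).Quotient → T × Set (KREdge A T))
    (by rintro ⟨u⟩ ⟨v⟩ h; exact (krCon ψ).eq.2 (Prod.ext_iff.1 h))

end KarnofskyRhodes

section EnteringZero

variable {A T : Type}

theorem WithOne.coe_zero_mul [SemigroupWithZero T] (X : WithOne T) :
    ((0 : T) : WithOne T) * X = ((0 : T) : WithOne T) := by
  induction X using WithOne.recOneCoe with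
  | one => exact mul_one _
  | coe t => rw [← WithOne.coe_mul, zero_mul]

theorem WithOne.coe_mul_eq_coe_zero_iff [SemigroupWithZero T] [NoZeroDivisors T] (s : T)
    (X : WithOne T) :
    (s : WithOne T) * X = ((0 : T) : WithOne T) ↔ s = 0 ∨ X = ((0 : T) : WithOne T) := by
  induction X using WithOne.recOneCoe with
  | one => simp
  | coe t => simp only [← WithOne.coe_mul, WithOne.coe_inj, mul_eq_zero]

theorem WithOne.eq_one_of_coe_mul_eq_self [MonoidWithZero T] [IsRightCancelMulZero T] {s : T}
    {X : WithOne T} (hX : X ≠ ((0 : T) : WithOne T)) (h : (s : WithOne T) * X = X) : s = 1 := by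
  induction X using WithOne.recOneCoe with
  | one => exact absurd (mul_one (s : WithOne T) ▸ h) WithOne.coe_ne_one
  | coe t =>
    rw [← WithOne.coe_mul, WithOne.coe_inj] at h
    exact (mul_eq_right₀ fun ht => hX (congrArg _ ht)).1 h

def EntersZero [Zero T] (e : KREdge A T) : Prop :=
  e.1.1 ≠ ((0 : T) : WithOne T) ∧ e.2.2.1 = ((0 : T) : WithOne T)

section SemigroupWithZero

variable [SemigroupWithZero T] (ψ : FreeSemigroup A →ₙ* T)

theorem reflTransGen_krStep_fst_eq_zero {v w : KRVtx T}
    (h : Relation.ReflTransGen (KRStep ψ) v w) (hv : v.1 = ((0 : T) : WithOne T)) :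
    w.1 = ((0 : T) : WithOne T) := by
  induction h with
  | refl => exact hv
  | tail _ hstep ih =>
    obtain ⟨a, h₁, -⟩ := hstep
    rw [← h₁, ih, WithOne.coe_zero_mul]

theorem EntersZero.isTransEdge {e : KREdge A T} (he : IsKREdge ψ e) (hz : EntersZero e) :
    IsTransEdge ψ e :=
  ⟨he, fun hr => hz.1 (reflTransGen_krStep_fst_eq_zero ψ hr hz.2)⟩

variable [NoZeroDivisors T]

theorem wordImg_eq_coe_zero_iff (l : List A) :
    wordImg ψ l = ((0 : T) : WithOne T) ↔ ∃ b ∈ l, ψ (FreeSemigroup.of b) = 0 := by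
  induction l with
  | nil => simp [wordImg]
  | cons a l ih =>
    rw [wordImg_cons, letterImg, WithOne.coe_mul_eq_coe_zero_iff, ih]
    simp

def zeroFreePrefix [DecidableEq T] (l : List A) : List A :=
  l.takeWhile fun b => ψ (FreeSemigroup.of b) ≠ 0

theorem zeroFreePrefix_append [DecidableEq T] {l₁ : List A} (l₂ : List A)
    (h : wordImg ψ l₁ ≠ ((0 : T) : WithOne T)) :
    zeroFreePrefix ψ (l₁ ++ l₂) = l₁ ++ zeroFreePrefix ψ l₂ := by
  rw [Ne, wordImg_eq_coe_zero_iff] at h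
  exact List.takeWhile_append_of_pos (by simpa using h)

theorem fst_eq_wordImg_zeroFreePrefix [DecidableEq T] {w : FreeSemigroup A} {e : KREdge A T}
    (he : e ∈ pathEdges ψ w) (hz : EntersZero e) :
    e.1.1 = wordImg ψ (zeroFreePrefix ψ (letters w)) := by
  obtain ⟨w₁, w₂, a, hw, rfl⟩ := he
  obtain ⟨hw₁, hw₁a⟩ := hz
  have ha : ψ (FreeSemigroup.of a) = 0 := by
    obtain ⟨b, hb, hb0⟩ := (wordImg_eq_coe_zero_iff ψ _).1 hw₁a
    rcases List.mem_append.1 hb with hb | hb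
    · exact absurd ((wordImg_eq_coe_zero_iff ψ _).2 ⟨b, hb, hb0⟩) hw₁
    · rwa [List.mem_singleton.1 hb] at hb0
  rw [hw, zeroFreePrefix_append ψ _ hw₁, zeroFreePrefix, List.takeWhile_cons_of_neg (by simpa),
    List.append_nil]

theorem exists_entersZero_mem_transEdges [DecidableEq T] {w : FreeSemigroup A}
    (hw : ψ w = 0) : ∃ e ∈ transEdges ψ w, EntersZero e := by
  set p := fun b => decide (ψ (FreeSemigroup.of b) ≠ 0)
  have hne : (letters w).dropWhile p ≠ [] := by
    rw [Ne, List.dropWhile_eq_nil_iff]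
    intro hall
    obtain ⟨b, hb, hb0⟩ := (wordImg_eq_coe_zero_iff ψ _).1 (by rw [wordImg_letters, hw])
    simpa [p, hb0] using hall b hb
  obtain ⟨a, q, hq⟩ := List.exists_cons_of_ne_nil hne
  have ha : ψ (FreeSemigroup.of a) = 0 := by
    have hhead : ((letters w).dropWhile p).head hne = a := by simp [hq]
    have hnot := List.head_dropWhile_not p hne
    rw [hhead] at hnot
    simpa [p] using hnot
  have hsplit : letters w = zeroFreePrefix ψ (letters w) ++ a :: q := by
    rw [← hq]; exact List.takeWhile_append_dropWhile.symm
  have hz : EntersZero (pathEdgeAt ψ (zeroFreePrefix ψ (letters w)) a q) := by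
    refine ⟨fun h => ?_, (wordImg_eq_coe_zero_iff ψ _).2 ⟨a, by simp, ha⟩⟩
    obtain ⟨b, hb, hb0⟩ := (wordImg_eq_coe_zero_iff ψ _).1 h
    simpa [hb0] using List.mem_takeWhile_imp hb
  have hmem := (⟨_, _, _, hsplit, rfl⟩ : pathEdgeAt ψ _ a q ∈ pathEdges ψ w)
  exact ⟨_, ⟨hmem, hz.isTransEdge ψ (isKREdge_of_mem_pathEdges ψ hmem)⟩, hz⟩

end SemigroupWithZero

theorem eq_one_of_transEdges_mul_eq [MonoidWithZero T] [IsCancelMulZero T]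
    (ψ : FreeSemigroup A →ₙ* T) {u z : FreeSemigroup A} (hz : ψ z = 0) (hu : ψ u ≠ 0)
    (h : transEdges ψ (u * z) = transEdges ψ z) : ψ u = 1 := by
  classical
  obtain ⟨e, he, hze⟩ := exists_entersZero_mem_transEdges ψ (w := u * z) (by simp [hz])
  have h₁ := fst_eq_wordImg_zeroFreePrefix ψ he.1 hze
  have h₂ := fst_eq_wordImg_zeroFreePrefix ψ (h ▸ he).1 hze
  rw [letters_mul, zeroFreePrefix_append ψ _ (by simpa [wordImg_letters] using hu),
    wordImg_append, wordImg_letters, ← h₂] at h₁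
  exact WithOne.eq_one_of_coe_mul_eq_self hze.1 h₁.symm

end EnteringZero

theorem KRExp.eq_one_of_section {A M : Type} [MonoidWithZero M] [IsCancelMulZero M]
    {ψ : FreeSemigroup A →ₙ* M} (E : KRExp ψ) (σ : M →ₙ* E.K) (hσ : ∀ s, E.π (σ s) = s)
    {s : M} (hs : s ≠ 0) : s = 1 := by
  have hψ (w : FreeSemigroup A) : ψ w = E.π (E.ψKR w) := (DFunLike.congr_fun E.proj w).symm
  obtain ⟨u, hu⟩ := E.surj (σ s)
  obtain ⟨z, hz⟩ := E.surj (σ 0)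
  have huz : E.ψKR (u * z) = σ 0 := by rw [map_mul, hu, hz, ← map_mul, mul_zero]
  have huuz : E.ψKR (u * (u * z)) = E.ψKR (u * z) := by
    rw [map_mul, hu, huz, ← map_mul, mul_zero]
  have hψu : ψ u = s := by rw [hψ, hu, hσ]
  rw [← hψu]
  exact eq_one_of_transEdges_mul_eq ψ (by rw [hψ, huz, hσ]) (hψu ▸ hs) ((E.ker _ _).1 huuz).2

theorem isKRCover_discTopSgr_of_forall_ne_zero {M : Type} [MonoidWithZero M] [NoZeroDivisors M]
    [Finite M] (h : ∀ s : M, s ≠ 0 → s = 1) : IsKRCover (discTopSgr M) := by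
  intro T _ _ hex
  refine ⟨hex, fun (φ : M →ₙ* T) _ hφ => ?_⟩
  let ψ : FreeSemigroup M →ₙ* T := FreeSemigroup.lift φ
  have hψ : Function.Surjective ψ := fun t =>
    let ⟨s, hs⟩ := hφ t
    ⟨FreeSemigroup.of s, (FreeSemigroup.lift_of φ s).trans hs⟩
  let E := krExp ψ
  have hπ : Function.Surjective E.π := Function.Surjective.of_comp (g := E.ψKR) hψ
  have hφ_idem (s : M) (hs : s * s = s) : IsIdempotentElem (φ s) := by
    rw [IsIdempotentElem, ← map_mul, hs]
  obtain ⟨f, o, hf, ho, hfo, hof, hπf, hπo⟩ := exists_isIdempotentElem_lift hπ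
    (hφ_idem 1 (mul_one 1)) (hφ_idem 0 (mul_zero 0))
    (by rw [← map_mul, one_mul]) (by rw [← map_mul, zero_mul])
  refine ⟨⟨M, ψ, hψ, E⟩, MulHom.piecewiseZero (M := M) hf ho hfo hof, continuous_bot,
    MulHom.ext fun (s : M) => ?_⟩
  change E.π (MulHom.piecewiseZero hf ho hfo hof s) = φ s
  rcases eq_or_ne s 0 with rfl | hs
  · rw [MulHom.piecewiseZero_zero, hπo]
  · rw [MulHom.piecewiseZero_of_ne_zero _ _ _ _ hs, hπf, h s hs]

theorem isKRCover_discTopSgr_iff {M : Type} [MonoidWithZero M] [IsCancelMulZero M] [Finite M] :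
    IsKRCover (discTopSgr M) ↔ ∀ s : M, s ≠ 0 → s = 1 := by
  refine ⟨fun h s hs => ?_, isKRCover_discTopSgr_of_forall_ne_zero⟩
  obtain ⟨-, H⟩ := h M ⟨MulHom.id M, continuous_bot, Function.surjective_id⟩
  obtain ⟨D, σ, -, hσ⟩ := H (MulHom.id M) continuous_bot Function.surjective_id
  exact D.E.eq_one_of_section σ (DFunLike.congr_fun hσ) hs

/-- `G⁰` is equidivisible and is a KR-cover iff the finite group `G` is
trivial. -/
theorem groupWithZero_equidivisible_KRCover_iff (G : Type) [Group G] [Finite G] :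
    Equidivisible (WithZero G) ∧
    (IsKRCover (discTopSgr (WithZero G)) ↔ ∀ g : G, g = 1) := by
  refine ⟨equidivisible_of_groupWithZero _, isKRCover_discTopSgr_iff.trans
    ⟨fun h g => WithZero.coe_inj.1 (h g WithZero.coe_ne_zero), fun h s hs => ?_⟩⟩
  obtain ⟨g, rfl⟩ := WithZero.ne_zero_iff_exists.1 hs
  rw [h g, WithZero.coe_one]
end

section
/- Let (S_i)_{i∈I} be an inverse system of profinite semigroups over an upward-directed index set I, with all connecting continuous homomorphisms onto, such that each S_i is a KR-cover. Then the inverse limit S = lim←_{i∈I} S_i is a KR-cover. -/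
set_option autoImplicit false

/-!
A continuous homomorphism `φ` from the inverse limit onto a finite discrete semigroup factors
through some projection `p_k`: otherwise the closed sets
`{(x, y) | p_k x = p_k y ∧ φ x ≠ φ y}` would form a directed family of nonempty compact sets
with empty intersection, since the projections separate points. The projection `p_k` is onto
(again by compactness) and closed, hence a quotient map, so the induced map `S_k → T` is
continuous. Since `S_k` is a KR-cover, the induced map lifts to an expansion `T_ψ^KR`, and
composing that lift with `p_k` lifts `φ`.
-/

open Function Topology

theorem exists_factorsThrough_of_separating {X ι Z : Type*} [TopologicalSpace X]
    [CompactSpace X] [Nonempty ι] {Y : ι → Type*} [∀ i, TopologicalSpace (Y i)]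
    [∀ i, T2Space (Y i)] [TopologicalSpace Z] [DiscreteTopology Z]
    (p : ∀ i, X → Y i) (hp : ∀ i, Continuous (p i))
    (hdir : ∀ i j, ∃ k, (p i).FactorsThrough (p k) ∧ (p j).FactorsThrough (p k))
    (hsep : ∀ x y, (∀ i, p i x = p i y) → x = y)
    {g : X → Z} (hg : Continuous g) :
    ∃ k, g.FactorsThrough (p k) := by
  by_contra! hbad
  simp only [FactorsThrough, not_forall] at hbad
  let D : ι → Set (X × X) := fun i => {q | p i q.1 = p i q.2} ∩ {q | g q.1 ≠ g q.2}
  have hclosed : ∀ i, IsClosed (D i) := fun i =>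
    (isClosed_eq ((hp i).comp continuous_fst) ((hp i).comp continuous_snd)).inter
      ((isOpen_discrete {z : Z × Z | z.1 = z.2}).isClosed_compl.preimage (hg.prodMap hg))
  have hdirected : Directed (· ⊇ ·) D := by
    intro i j
    obtain ⟨k, hik, hjk⟩ := hdir i j
    exact ⟨k, fun q hq => ⟨hik hq.1, hq.2⟩, fun q hq => ⟨hjk hq.1, hq.2⟩⟩
  have hnonempty : ∀ i, (D i).Nonempty := fun i =>
    let ⟨x, y, hxy, hg⟩ := hbad i
    ⟨(x, y), hxy, hg⟩
  obtain ⟨q, hq⟩ := IsCompact.nonempty_iInter_of_directed_nonempty_isCompact_isClosed D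
    hdirected hnonempty (fun i => (hclosed i).isCompact) hclosed
  rw [Set.mem_iInter] at hq
  exact (hq (Classical.arbitrary ι)).2 (congrArg g (hsep _ _ fun i => (hq i).1))

theorem MulHom.exists_comp_eq_of_factorsThrough {M N P : Type*} [Mul M] [Mul N] [Mul P]
    {p : M →ₙ* N} (hp : Surjective p) {φ : M →ₙ* P} (h : FactorsThrough φ p) :
    ∃ φ' : N →ₙ* P, φ'.comp p = φ :=
  ⟨{ toFun := φ ∘ surjInv hp
     map_mul' := fun a b => by
       change φ (surjInv hp (a * b)) = φ (surjInv hp a) * φ (surjInv hp b)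
       rw [← map_mul]
       exact h (by rw [map_mul, surjInv_eq hp, surjInv_eq hp, surjInv_eq hp]) },
    MulHom.ext fun x => h (surjInv_eq hp _)⟩

theorem IsKRCover.of_forall_factor {S : TopSgr}
    (h : ∀ (T : Type) [Semigroup T] [Finite T] (φ : S.carrier →ₙ* T), ContinuousDisc φ →
      Surjective φ →
        ∃ (S' : TopSgr) (p : S.carrier →ₙ* S'.carrier) (φ' : S'.carrier →ₙ* T),
          IsKRCover S' ∧ Continuous p ∧ ContinuousDisc φ' ∧ φ'.comp p = φ) :
    IsKRCover S := by
  intro T _ _ hex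
  refine ⟨hex, fun φ hφ hφsurj => ?_⟩
  obtain ⟨S', p, φ', hS', hp, hφ', rfl⟩ := h T φ hφ hφsurj
  have hφ'surj : Surjective φ' := hφsurj.of_comp (g := p)
  obtain ⟨-, hKR⟩ := hS' T ⟨φ', hφ', hφ'surj⟩
  obtain ⟨D, ψ, hψ, hψφ'⟩ := hKR φ' hφ' hφ'surj
  let : TopologicalSpace D.E.K := ⊥
  exact ⟨D, ψ.comp p, hψ.comp hp, by rw [← MulHom.comp_assoc, hψφ']⟩

section InverseLimit

variable {I : Type} [Preorder I] {S : I → TopSgr}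
  (f : ∀ i j, j ≤ i → ((S i).carrier →ₙ* (S j).carrier))

def invLimProj (k : I) : (invLimTopSgr S f).carrier →ₙ* (S k).carrier where
  toFun x := x.1 k
  map_mul' _ _ := rfl

theorem continuous_invLimProj (k : I) : Continuous (invLimProj f k) :=
  (continuous_apply k).comp continuous_subtype_val

theorem factorsThrough_invLimProj_of_le {i j : I} (h : j ≤ i) :
    FactorsThrough (invLimProj f j) (invLimProj f i) := fun x y hxy => by
  change x.1 j = y.1 j
  rw [← x.2 i j h, ← y.2 i j h]
  exact congrArg _ hxy

variable [∀ i, T2Space (S i).carrier]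

theorem isClosed_invLimSub (hcont : ∀ i j (h : j ≤ i), Continuous (f i j h)) :
    IsClosed (invLimSub S f : Set (∀ i, (S i).carrier)) := by
  simp only [invLimSub, Subsemigroup.coe_set_mk, Set.ofPred_forall]
  exact isClosed_iInter fun i => isClosed_iInter fun j => isClosed_iInter fun h =>
    isClosed_eq ((hcont i j h).comp (continuous_apply i)) (continuous_apply j)

variable [∀ i, CompactSpace (S i).carrier]

theorem compactSpace_invLim (hcont : ∀ i j (h : j ≤ i), Continuous (f i j h)) :
    CompactSpace (invLimTopSgr S f).carrier :=
  isCompact_iff_compactSpace.mp (isClosed_invLimSub f hcont).isCompact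

theorem surjective_invLimProj (hcont : ∀ i j (h : j ≤ i), Continuous (f i j h))
    (hdir : ∀ i j : I, ∃ k, i ≤ k ∧ j ≤ k)
    (hsurj : ∀ i j (h : j ≤ i), Surjective (f i j h))
    (hcomp : ∀ i j k (hij : j ≤ i) (hjk : k ≤ j) (x : (S i).carrier),
      f j k hjk (f i j hij x) = f i k (hjk.trans hij) x)
    (k : I) : Surjective (invLimProj f k) := by
  classical
  intro s
  have : Nonempty I := ⟨k⟩
  have hne : ∀ i, Nonempty (S i).carrier := fun i =>
    let ⟨m, hmi, hmk⟩ := hdir i k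
    ⟨f m i hmi (hsurj m k hmk s).choose⟩
  let D : I → Set (∀ i, (S i).carrier) := fun j =>
    {x | x k = s} ∩ {x | ∀ i i' (h : i' ≤ i), i ≤ j → f i i' h (x i) = x i'}
  have hclosed : ∀ j, IsClosed (D j) := fun j => by
    simp only [D, Set.ofPred_forall]
    exact (isClosed_eq (continuous_apply k) continuous_const).inter <|
      isClosed_iInter fun i => isClosed_iInter fun i' => isClosed_iInter fun h =>
        isClosed_iInter fun _ => isClosed_eq ((hcont i i' h).comp (continuous_apply i))
          (continuous_apply i')
  have hdirected : Directed (· ⊇ ·) D := fun j j' =>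
    let ⟨m, hjm, hj'm⟩ := hdir j j'
    ⟨m, fun _ hx => ⟨hx.1, fun i i' h hi => hx.2 i i' h (hi.trans hjm)⟩,
      fun _ hx => ⟨hx.1, fun i i' h hi => hx.2 i i' h (hi.trans hj'm)⟩⟩
  have hnonempty : ∀ j, (D j).Nonempty := by
    intro j
    obtain ⟨m, hjm, hkm⟩ := hdir j k
    obtain ⟨y, rfl⟩ := hsurj m k hkm s
    refine ⟨fun i => if h : i ≤ m then f m i h y else Classical.arbitrary _, dif_pos hkm,
      fun i i' h hi => ?_⟩
    simp only [dif_pos (hi.trans hjm), dif_pos (h.trans (hi.trans hjm)), hcomp]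
  obtain ⟨x, hx⟩ := IsCompact.nonempty_iInter_of_directed_nonempty_isCompact_isClosed D
    hdirected hnonempty (fun j => (hclosed j).isCompact) hclosed
  rw [Set.mem_iInter] at hx
  exact ⟨⟨x, fun i j h => (hx i).2 i j h le_rfl⟩, (hx k).1⟩

theorem exists_factorsThrough_invLimProj [Nonempty I]
    (hcont : ∀ i j (h : j ≤ i), Continuous (f i j h))
    (hdir : ∀ i j : I, ∃ k, i ≤ k ∧ j ≤ k)
    {T : Type} [Semigroup T] (φ : (invLimTopSgr S f).carrier →ₙ* T) (hφ : ContinuousDisc φ) :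
    ∃ k, FactorsThrough φ (invLimProj f k) := by
  let : TopologicalSpace T := ⊥
  have : DiscreteTopology T := ⟨rfl⟩
  have := compactSpace_invLim f hcont
  refine exists_factorsThrough_of_separating (fun i => invLimProj f i) (continuous_invLimProj f)
    (fun i j => ?_) (fun x y h => Subtype.ext (funext h)) hφ
  obtain ⟨k, hik, hjk⟩ := hdir i j
  exact ⟨k, factorsThrough_invLimProj_of_le f hik, factorsThrough_invLimProj_of_le f hjk⟩

theorem exists_continuousDisc_comp_invLimProj_eq [Nonempty I]
    (hcont : ∀ i j (h : j ≤ i), Continuous (f i j h))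
    (hdir : ∀ i j : I, ∃ k, i ≤ k ∧ j ≤ k)
    (hsurj : ∀ i j (h : j ≤ i), Surjective (f i j h))
    (hcomp : ∀ i j k (hij : j ≤ i) (hjk : k ≤ j) (x : (S i).carrier),
      f j k hjk (f i j hij x) = f i k (hjk.trans hij) x)
    {T : Type} [Semigroup T] (φ : (invLimTopSgr S f).carrier →ₙ* T) (hφ : ContinuousDisc φ) :
    ∃ k, ∃ φk : (S k).carrier →ₙ* T,
      ContinuousDisc φk ∧ φk.comp (invLimProj f k) = φ := by
  obtain ⟨k, hk⟩ := exists_factorsThrough_invLimProj f hcont hdir φ hφ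
  have hproj := surjective_invLimProj f hcont hdir hsurj hcomp k
  have := compactSpace_invLim f hcont
  have hq : IsQuotientMap (invLimProj f k) :=
    (continuous_invLimProj f k).isClosedMap.isQuotientMap (continuous_invLimProj f k) hproj
  obtain ⟨φk, rfl⟩ := MulHom.exists_comp_eq_of_factorsThrough hproj hk
  let : TopologicalSpace T := ⊥
  exact ⟨k, φk, hq.continuous_iff.mpr hφ, rfl⟩

end InverseLimit

theorem invLim_isKRCover_general {I : Type} [Nonempty I] [Preorder I]
    (hdir : ∀ i j : I, ∃ k, i ≤ k ∧ j ≤ k)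
    (S : I → TopSgr) (hpro : ∀ i, IsProfiniteSgr (S i)) (hcov : ∀ i, IsKRCover (S i))
    (f : ∀ i j, j ≤ i → ((S i).carrier →ₙ* (S j).carrier))
    (hcont : ∀ i j (h : j ≤ i), Continuous ⇑(f i j h))
    (hsurj : ∀ i j (h : j ≤ i), Function.Surjective ⇑(f i j h))
    (hcomp : ∀ i j k (hij : j ≤ i) (hjk : k ≤ j) (x : (S i).carrier),
      f j k hjk (f i j hij x) = f i k (hjk.trans hij) x) :
    IsKRCover (invLimTopSgr S f) := by
  have : ∀ i, CompactSpace (S i).carrier := fun i => (hpro i).1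
  have : ∀ i, T2Space (S i).carrier := fun i => (hpro i).2.1
  refine IsKRCover.of_forall_factor fun T _ _ φ hφ _ => ?_
  obtain ⟨k, φk, hφk, rfl⟩ :=
    exists_continuousDisc_comp_invLimProj_eq f hcont hdir hsurj hcomp φ hφ
  exact ⟨S k, invLimProj f k, φk, hcov k, continuous_invLimProj f k, hφk, rfl⟩

/-- An inverse quotient limit of KR-covers over a directed index set is a
KR-cover. -/
theorem invLim_isKRCover {I : Type} [Nonempty I] [Preorder I]
    (hdir : ∀ i j : I, ∃ k, i ≤ k ∧ j ≤ k)
    (S : I → TopSgr) (hpro : ∀ i, IsProfiniteSgr (S i)) (hcov : ∀ i, IsKRCover (S i))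
    (f : ∀ i j, j ≤ i → ((S i).carrier →ₙ* (S j).carrier))
    (hcont : ∀ i j (h : j ≤ i), Continuous ⇑(f i j h))
    (hsurj : ∀ i j (h : j ≤ i), Function.Surjective ⇑(f i j h))
    (hid : ∀ i (h : i ≤ i) (x : (S i).carrier), f i i h x = x)
    (hcomp : ∀ i j k (hij : j ≤ i) (hjk : k ≤ j) (x : (S i).carrier),
      f j k hjk (f i j hij x) = f i k (hjk.trans hij) x) :
    IsKRCover (invLimTopSgr S f) :=
  invLim_isKRCover_general hdir S hpro hcov f hcont hsurj hcomp
end
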